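/- arXiv:1604.07840 — 3 statements merged into one kernel-verified Lean document; each statement's English description precedes it below -/
import Mathlib

section
/- Let f : ℝ → ℝ be continuously differentiable with f'(r) ≤ 0 for all r, and let β : ℝ → ℝ be continuously differentiable with nondecreasing derivative β'. Then for all x, y ∈ ℝ one has β'(x)·(f(y) − f(x)) ≥ ∫_x^y f'(τ)·β'(τ) dτ, where the integral is the signed interval integral. -/
open Set intervalIntegral
open scoped Interval

section

variable {g h : ℝ → ℝ} {x y : ℝ}

/-- Since `g ≤ 0`, the sign of `g t * (h t - h x)` is opposite to that of `t - x`, which is also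
the orientation sign of the interval integral at `t`. -/
lemma integral_mul_sub_apply_nonpos_of_nonpos_of_monotoneOn
    (hg0 : ∀ t ∈ [[x, y]], g t ≤ 0) (hh : MonotoneOn h [[x, y]]) :
    ∫ t in x..y, g t * (h t - h x) ≤ 0 := by
  have hx : x ∈ [[x, y]] := left_mem_uIcc
  rcases le_total x y with hxy | hyx
  · have hnonneg : 0 ≤ ∫ t in x..y, -(g t * (h t - h x)) := by
      refine integral_nonneg hxy fun t ht => neg_nonneg.2 ?_
      have ht' : t ∈ [[x, y]] := Icc_subset_uIcc ht
      exact mul_nonpos_of_nonpos_of_nonneg (hg0 t ht') (sub_nonneg.2 (hh hx ht' ht.1))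
    rw [integral_neg] at hnonneg
    linarith
  · rw [integral_symm, neg_nonpos]
    refine integral_nonneg hyx fun t ht => ?_
    have ht' : t ∈ [[x, y]] := Icc_subset_uIcc' ht
    exact mul_nonneg_of_nonpos_of_nonpos (hg0 t ht') (sub_nonpos.2 (hh ht' hx ht.2))

lemma integral_mul_le_apply_mul_integral_of_nonpos_of_monotoneOn
    (hg : ContinuousOn g [[x, y]]) (hg0 : ∀ t ∈ [[x, y]], g t ≤ 0)
    (hh : MonotoneOn h [[x, y]]) :
    ∫ t in x..y, g t * h t ≤ h x * ∫ t in x..y, g t := by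
  have hgh : IntervalIntegrable (fun t => g t * h t) MeasureTheory.volume x y :=
    hh.intervalIntegrable.continuousOn_mul hg
  have hgc : IntervalIntegrable (fun t => g t * h x) MeasureTheory.volume x y :=
    intervalIntegrable_const.continuousOn_mul hg
  have hsplit : ∫ t in x..y, g t * (h t - h x)
      = (∫ t in x..y, g t * h t) - h x * ∫ t in x..y, g t := by
    simp only [mul_sub, integral_sub hgh hgc, integral_mul_const, mul_comm]
  have hdiff := integral_mul_sub_apply_nonpos_of_nonpos_of_monotoneOn hg0 hh
  rw [hsplit] at hdiff
  linarith

end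

theorem upwind_entropy_monotonicity_general
    (f β : ℝ → ℝ)
    (hf : ContDiff ℝ 1 f) (hf' : ∀ r : ℝ, deriv f r ≤ 0)
    (hβ' : Monotone (deriv β)) :
    ∀ x y : ℝ,
      deriv β x * (f y - f x) ≥ ∫ τ in x..y, deriv f τ * deriv β τ := by
  intro x y
  have hf'c : Continuous (deriv f) := hf.continuous_deriv le_rfl
  rw [← integral_deriv_eq_sub (fun t _ => hf.differentiable one_ne_zero t)
    (hf'c.intervalIntegrable x y)]
  exact integral_mul_le_apply_mul_integral_of_nonpos_of_monotoneOn hf'c.continuousOn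
    (fun t _ => hf' t) (hβ'.monotoneOn _)

/-- Monotonicity inequality: if `f` is C¹ with `f' ≤ 0` and `β` is C¹ with nondecreasing
derivative, then `β'(x) * (f y - f x) ≥ ∫_x^y f'(τ) * β'(τ) dτ`. -/
theorem upwind_entropy_monotonicity
    (f β : ℝ → ℝ)
    (hf : ContDiff ℝ 1 f) (hf' : ∀ r : ℝ, deriv f r ≤ 0)
    (hβ : ContDiff ℝ 1 β) (hβ' : Monotone (deriv β)) :
    ∀ x y : ℝ,
      deriv β x * (f y - f x) ≥ ∫ τ in x..y, deriv f τ * deriv β τ :=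
  upwind_entropy_monotonicity_general f β hf hf' hβ'
end

section
/- Let f : ℝ → ℝ be continuously differentiable with f'(r) ≤ 0 for all r, and let β : ℝ → ℝ be twice continuously differentiable with β''(r) ≥ 0 for all r. Then for all a, b, k ∈ ℝ: (i) ∫_a^b β''(r−k)·(f(b) − f(r)) dr = −β'(a−k)·(f(b) − f(a)) + ∫_a^b β'(r−k)·f'(r) dr, and (ii) ∫_a^b β''(r−k)·(f(b) − f(r)) dr ≤ 0; consequently β'(a−k)·(f(b) − f(a)) ≥ ∫_a^b β'(r−k)·f'(r) dr. All integrals are signed interval integrals. -/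
/-!
Integrating by parts against `r ↦ f b - f r`, which vanishes at `r = b`, turns the integral of
`β''(r - k) (f b - f r)` into the boundary term at `a` plus `∫ β'(r - k) f'(r)`. Since `f` is
nonincreasing, `f b - f r` has the sign opposite to that of `b - r`, so together with `β'' ≥ 0` the
oriented integral is nonpositive, whatever the order of `a` and `b`.
-/

open intervalIntegral Set

theorem integral_deriv_mul_sub_eq {f g g' : ℝ → ℝ} (a b : ℝ)
    (hg : ∀ x, HasDerivAt g (g' x) x) (hg' : Continuous g') (hf : ContDiff ℝ 1 f) :
    ∫ r in a..b, g' r * (f b - f r) = -(g a * (f b - f a)) + ∫ r in a..b, g r * deriv f r := by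
  have hf_diff : Differentiable ℝ f := hf.differentiable one_ne_zero
  have hv : ∀ x ∈ uIcc a b, HasDerivAt (fun r => f b - f r) (-deriv f x) x := fun x _ =>
    (hf_diff x).hasDerivAt.const_sub (f b)
  have ibp := integral_mul_deriv_eq_deriv_mul (fun x _ => hg x) hv
    (hg'.intervalIntegrable a b) ((hf.continuous_deriv le_rfl).neg.intervalIntegrable a b)
  simp only [mul_neg, integral_neg, sub_self, mul_zero, zero_sub] at ibp
  linarith

theorem integral_mul_sub_nonpos_of_antitone {f w : ℝ → ℝ} (a b : ℝ)
    (hf : Antitone f) (hw : ∀ r, 0 ≤ w r) :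
    ∫ r in a..b, w r * (f b - f r) ≤ 0 := by
  rcases le_total a b with hab | hba
  · have h : 0 ≤ ∫ r in a..b, -(w r * (f b - f r)) := integral_nonneg hab fun r hr =>
      neg_nonneg.2 (mul_nonpos_of_nonneg_of_nonpos (hw r) (sub_nonpos.2 (hf hr.2)))
    rwa [integral_neg, neg_nonneg] at h
  · rw [integral_symm, neg_nonpos]
    exact integral_nonneg hba fun r hr => mul_nonneg (hw r) (sub_nonneg.2 (hf hr.1))

/-- Entropy consistency of the upwind scheme for a nonincreasing flux `f` and a convex
entropy `β(· - k)`: an integration-by-parts identity, the sign of the resulting integral,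
and the consequent inequality. -/
theorem discrete_entropy_flux_inequality
    (f β : ℝ → ℝ)
    (hf : ContDiff ℝ 1 f) (hf' : ∀ r : ℝ, deriv f r ≤ 0)
    (hβ : ContDiff ℝ 2 β) (hβ'' : ∀ r : ℝ, 0 ≤ deriv (deriv β) r) :
    ∀ a b k : ℝ,
      ((∫ r in a..b, deriv (deriv β) (r - k) * (f b - f r))
          = -(deriv β (a - k) * (f b - f a)) + ∫ r in a..b, deriv β (r - k) * deriv f r)
      ∧ (∫ r in a..b, deriv (deriv β) (r - k) * (f b - f r)) ≤ 0
      ∧ deriv β (a - k) * (f b - f a) ≥ ∫ r in a..b, deriv β (r - k) * deriv f r := by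
  intro a b k
  have hβ' : ContDiff ℝ 1 (deriv β) := hβ.deriv' (n := 1)
  have hshift : ∀ x, HasDerivAt (fun r => deriv β (r - k)) (deriv (deriv β) (x - k)) x :=
    fun x => ((hβ'.differentiable one_ne_zero) (x - k)).hasDerivAt.comp_sub_const x k
  have ibp := integral_deriv_mul_sub_eq a b hshift
    ((hβ'.continuous_deriv le_rfl).comp (continuous_sub_right k)) hf
  have sign := integral_mul_sub_nonpos_of_antitone a b
    (antitone_of_deriv_nonpos (hf.differentiable one_ne_zero) hf') fun r => hβ'' (r - k)
  exact ⟨ibp, sign, by linarith⟩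
end

section
/- Let f : ℝ → ℝ be continuously differentiable with |f'(r)| ≤ L for all r, let ξ > 0, and let φ : ℝ → ℝ be a function with |φ(s)| ≤ 1 for all s and φ(s) = sign(s) whenever |s| ≥ ξ. Then for all a, b ∈ ℝ: (i) | ∫_b^a φ(r−b)·f'(r) dr − sign(a−b)·(f(a) − f(b)) | ≤ 2·L·ξ, and (ii) | ∫_b^a φ(r−b)·f'(r) dr | ≤ L·|a−b|. -/
/-!
For `r` strictly between `b` and `a` we have `sign (r - b) = sign (a - b)`, so the difference in
the first estimate is `∫_b^a (φ(r - b) - sign (a - b)) f'(r) dr`. Its integrand is bounded by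
`2 L` and vanishes once `|r - b| ≥ ξ`, so only a subinterval of length at most `ξ` adjacent to `b`
contributes. The second estimate is the pointwise bound `|φ(r - b) f'(r)| ≤ L`.
-/

open MeasureTheory Set
open scoped Interval

theorem IntervalIntegrable.bdd_mul {f g : ℝ → ℝ} {a b c : ℝ}
    (hg : IntervalIntegrable g volume a b) (hf : AEStronglyMeasurable f volume)
    (hf_bound : ∀ x, ‖f x‖ ≤ c) : IntervalIntegrable (fun x => f x * g x) volume a b :=
  ⟨hg.1.bdd_mul hf.restrict (ae_of_all _ hf_bound),
    hg.2.bdd_mul hf.restrict (ae_of_all _ hf_bound)⟩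

theorem Real.abs_sign_le_one (x : ℝ) : |Real.sign x| ≤ 1 := by
  rcases Real.sign_apply_eq x with h | h | h <;> simp [h]

theorem Real.sign_sub_eq_of_mem_uIcc {a b r : ℝ} (hr : r ∈ uIcc b a) (hrb : r ≠ b) :
    Real.sign (r - b) = Real.sign (a - b) := by
  rcases mem_uIcc.mp hr with ⟨hbr, hra⟩ | ⟨har, hrb'⟩
  · rw [Real.sign_of_pos (by grind), Real.sign_of_pos (by grind)]
  · rw [Real.sign_of_neg (by grind), Real.sign_of_neg (by grind)]

theorem norm_intervalIntegral_le_mul_of_eq_zero_of_le_abs_sub {E : Type*}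
    [NormedAddCommGroup E] [NormedSpace ℝ E] {g : ℝ → E} {a b C ξ : ℝ} (hξ : 0 ≤ ξ)
    (hg : IntervalIntegrable g volume b a) (hbound : ∀ r ∈ uIcc b a, ‖g r‖ ≤ C)
    (hvanish : ∀ r ∈ uIcc b a, ξ ≤ |r - b| → g r = 0) :
    ‖∫ r in b..a, g r‖ ≤ C * ξ := by
  set c := max (b - ξ) (min a (b + ξ))
  have hc : c ∈ uIcc b a := by simp only [c, mem_uIcc]; grind
  have hcb : |c - b| ≤ ξ := by rw [abs_le]; grind
  have hca : ∀ r ∈ Ι c a, r ∈ uIcc b a ∧ ξ ≤ |r - b| := by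
    intro r hr
    simp only [c, uIoc, mem_Ioc, mem_uIcc] at hr ⊢
    grind
  have hC : 0 ≤ C := (norm_nonneg _).trans (hbound b left_mem_uIcc)
  have htail : ∫ r in c..a, g r = 0 :=
    intervalIntegral.integral_zero_ae (ae_of_all _ fun r hr => hvanish r (hca r hr).1 (hca r hr).2)
  rw [← intervalIntegral.integral_add_adjacent_intervals (hg.mono_set (uIcc_subset_uIcc_left hc))
    (hg.mono_set (uIcc_subset_uIcc_right hc)), htail, add_zero]
  calc ‖∫ r in b..c, g r‖ ≤ C * |c - b| :=
        intervalIntegral.norm_integral_le_of_norm_le_const fun r hr =>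
          hbound r (uIcc_subset_uIcc_left hc (uIoc_subset_uIcc hr))
    _ ≤ C * ξ := mul_le_mul_of_nonneg_left hcb hC

/-- Comparison of the smoothed entropy flux `∫_b^a φ(r-b) f'(r) dr` (with `φ` a bounded
approximation of the sign function, equal to `sign` outside `[-ξ, ξ]`) with the Kružkov
entropy flux `sign(a-b)(f(a)-f(b))`, together with the Lipschitz bound. -/
theorem smoothed_entropy_flux_estimates
    (f : ℝ → ℝ) (L : ℝ) (hf : ContDiff ℝ 1 f)
    (hL : ∀ r : ℝ, |deriv f r| ≤ L)
    (ξ : ℝ) (hξ : 0 < ξ)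
    (φ : ℝ → ℝ) (hφmeas : Measurable φ)
    (hφbdd : ∀ s : ℝ, |φ s| ≤ 1)
    (hφsign : ∀ s : ℝ, ξ ≤ |s| → φ s = Real.sign s) :
    ∀ a b : ℝ,
      |(∫ r in b..a, φ (r - b) * deriv f r) - Real.sign (a - b) * (f a - f b)|
          ≤ 2 * L * ξ
      ∧ |∫ r in b..a, φ (r - b) * deriv f r| ≤ L * |a - b| := by
  intro a b
  have hf' : IntervalIntegrable (deriv f) volume b a :=
    (hf.continuous_deriv le_rfl).intervalIntegrable b a
  have hφ_shift : AEStronglyMeasurable (fun r => φ (r - b)) volume :=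
    (hφmeas.comp (measurable_sub_const b)).aestronglyMeasurable
  have hφ_sub : ∀ r, |φ (r - b) - Real.sign (a - b)| ≤ 2 := fun r =>
    (abs_sub _ _).trans (by linarith [hφbdd (r - b), Real.abs_sign_le_one (a - b)])
  have hdiff : (∫ r in b..a, φ (r - b) * deriv f r) - Real.sign (a - b) * (f a - f b) =
      ∫ r in b..a, (φ (r - b) - Real.sign (a - b)) * deriv f r := by
    rw [← intervalIntegral.integral_deriv_eq_sub
        (fun x _ => (hf.differentiable one_ne_zero).differentiableAt) hf',
      ← intervalIntegral.integral_const_mul,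
      ← intervalIntegral.integral_sub (hf'.bdd_mul hφ_shift fun r => hφbdd (r - b)) (hf'.const_mul _)]
    simp only [sub_mul]
  refine ⟨?_, ?_⟩
  · rw [hdiff, ← Real.norm_eq_abs]
    refine norm_intervalIntegral_le_mul_of_eq_zero_of_le_abs_sub hξ.le
      (hf'.bdd_mul (hφ_shift.sub aestronglyMeasurable_const) hφ_sub) (fun r _ => ?_)
      (fun r hr hξr => ?_)
    · rw [Real.norm_eq_abs, abs_mul]
      exact mul_le_mul (hφ_sub r) (hL r) (abs_nonneg _) zero_le_two
    · have hrb : r ≠ b := by rintro rfl; simp at hξr; linarith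
      rw [hφsign _ hξr, Real.sign_sub_eq_of_mem_uIcc hr hrb, sub_self, zero_mul]
  · rw [← Real.norm_eq_abs]
    refine intervalIntegral.norm_integral_le_of_norm_le_const fun r _ => ?_
    rw [Real.norm_eq_abs, abs_mul]
    exact (mul_le_mul (hφbdd _) (hL r) (abs_nonneg _) zero_le_one).trans_eq (one_mul L)
end
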